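/- Let Γ be a strictly Deza graph with parameters (n, k, b, a) with k = b + 1 and β(v) > 1 for every vertex v. Suppose x is a vertex of type (A), xᵢ ∈ B(x), y ∈ N(x) is not adjacent to xᵢ, and z is a vertex at distance 2 from x that is adjacent to xᵢ. Then (1) N(x) ∩ N(y) = N(x) ∩ N(z), and (2) for every vertex v ∈ N(x) ∩ N(y), B[v] ⊆ N(x) ∩ N(y). -/

import Mathlib

open Finset SimpleGraph

universe u v

/-- The number of common neighbours of two vertices. -/
def commonNbrs {V : Type u} [Fintype V] [DecidableEq V] (G : SimpleGraph V)
    [DecidableRel G.Adj] (x y : V) : ℕ :=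
  (G.neighborFinset x ∩ G.neighborFinset y).card

/-- `G` is a Deza graph with parameters `(n, k, b, a)`: a nonempty `k`-regular graph on `n`
vertices in which any two distinct vertices have either `b` or `a` common neighbours,
where `b ≥ a`. -/
def IsDezaGraph {V : Type u} [Fintype V] [DecidableEq V] (G : SimpleGraph V)
    [DecidableRel G.Adj] (n k b a : ℕ) : Prop :=
  G ≠ ⊥ ∧ Fintype.card V = n ∧ G.IsRegularOfDegree k ∧ a ≤ b ∧
    ∀ x y : V, x ≠ y → commonNbrs G x y = b ∨ commonNbrs G x y = a

/-- `G` is a strictly Deza graph with parameters `(n, k, b, a)`: a Deza graph of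
diameter 2 that is not strongly regular. -/
def IsStrictlyDezaGraph {V : Type u} [Fintype V] [DecidableEq V] (G : SimpleGraph V)
    [DecidableRel G.Adj] (n k b a : ℕ) : Prop :=
  IsDezaGraph G n k b a ∧ G.Connected ∧ (∀ x y : V, G.dist x y ≤ 2) ∧
    (∃ x y : V, G.dist x y = 2) ∧ ¬ ∃ ℓ μ : ℕ, G.IsSRGWith n k ℓ μ

/-- `B(v)`: the set of vertices `u ≠ v` having exactly `b` common neighbours with `v`. -/
def dezaB {V : Type u} [Fintype V] [DecidableEq V] (G : SimpleGraph V)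
    [DecidableRel G.Adj] (b : ℕ) (v : V) : Finset V :=
  univ.filter fun u => u ≠ v ∧ commonNbrs G u v = b

/-- `A(v)`: the set of vertices `u ≠ v` having exactly `a` common neighbours with `v`. -/
def dezaA {V : Type u} [Fintype V] [DecidableEq V] (G : SimpleGraph V)
    [DecidableRel G.Adj] (a : ℕ) (v : V) : Finset V :=
  univ.filter fun u => u ≠ v ∧ commonNbrs G u v = a

/-- `B[v] = B(v) ∪ {v}`. -/
def dezaBc {V : Type u} [Fintype V] [DecidableEq V] (G : SimpleGraph V)
    [DecidableRel G.Adj] (b : ℕ) (v : V) : Finset V :=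
  insert v (dezaB G b v)

/-- A vertex `v` is of type (A) if `B(v) ∩ N(v) = ∅`. -/
def IsTypeA {V : Type u} [Fintype V] [DecidableEq V] (G : SimpleGraph V)
    [DecidableRel G.Adj] (b : ℕ) (v : V) : Prop :=
  dezaB G b v ∩ G.neighborFinset v = ∅

/-- A vertex `v` is of type (B) if `B(v) ⊆ N(v)`. -/
def IsTypeB {V : Type u} [Fintype V] [DecidableEq V] (G : SimpleGraph V)
    [DecidableRel G.Adj] (b : ℕ) (v : V) : Prop :=
  dezaB G b v ⊆ G.neighborFinset v

/-- A vertex `v` is of type (C) if `|B(v) ∩ N(v)| = 1`. -/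
def IsTypeC {V : Type u} [Fintype V] [DecidableEq V] (G : SimpleGraph V)
    [DecidableRel G.Adj] (b : ℕ) (v : V) : Prop :=
  (dezaB G b v ∩ G.neighborFinset v).card = 1

/-- A vertex `x` of type (A) is of type (A1) if there exists `y ∈ N(x)` with
`N(x) \ N(xᵢ) = {y}` for every `xᵢ ∈ B(x)`. -/
def IsTypeA1 {V : Type u} [Fintype V] [DecidableEq V] (G : SimpleGraph V)
    [DecidableRel G.Adj] (b : ℕ) (x : V) : Prop :=
  IsTypeA G b x ∧ ∃ y ∈ G.neighborFinset x,
    ∀ xi ∈ dezaB G b x, G.neighborFinset x \ G.neighborFinset xi = {y}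

/-- A vertex `x` of type (A) is of type (A2) if there exists `z ∉ N[x]` with
`N(xᵢ) \ N(x) = {z}` for every `xᵢ ∈ B(x)`. -/
def IsTypeA2 {V : Type u} [Fintype V] [DecidableEq V] (G : SimpleGraph V)
    [DecidableRel G.Adj] (b : ℕ) (x : V) : Prop :=
  IsTypeA G b x ∧ ∃ z ∉ insert x (G.neighborFinset x),
    ∀ xi ∈ dezaB G b x, G.neighborFinset xi \ G.neighborFinset x = {z}

/-- The complete multipartite graph with `m` parts of size `t`. -/
def completeMultipartiteGr (m t : ℕ) : SimpleGraph (Fin m × Fin t) where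
  Adj u v := u.1 ≠ v.1
  symm := ⟨fun _ _ h => Ne.symm h⟩
  loopless := ⟨fun _ h => h rfl⟩

/-- The 2-clique extension of a graph `H`: vertices `(u, i)` and `(v, j)` are adjacent
iff `u ~ v` in `H`, or `u = v` and `i ≠ j`. -/
def cliqueExt2 {W : Type v} (H : SimpleGraph W) : SimpleGraph (W × Fin 2) where
  Adj u v := H.Adj u.1 v.1 ∨ (u.1 = v.1 ∧ u.2 ≠ v.2)
  symm := by
    constructor
    intro u v h
    rcases h with h | ⟨h1, h2⟩
    · exact Or.inl h.symm
    · exact Or.inr ⟨h1.symm, h2.symm⟩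
  loopless := by
    constructor
    intro u h
    rcases h with h | ⟨_, h2⟩
    · exact H.loopless.irrefl _ h
    · exact h2 rfl

/-!
Since `k = b + 1`, a vertex shares `b` neighbours with `v` exactly when at most one of its
neighbours lies outside `N(v)`. Hence `N(xᵢ)` is `N(x)` with `y` exchanged for `z`. Comparing the
`a` common neighbours that a vertex `w ∈ N(x) \ {y}` has with `x` and with `xᵢ` shows
`w ~ y ↔ w ~ z`, which gives (1) as soon as `y ≁ z`. If `y ~ z`, counting common neighbours of `y`
and `xᵢ` forces `b = a + 1`; a vertex of `N(x) ∩ N(y)` would then have the three neighbours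
`x, z, xᵢ` outside `N(x)`, one too many, so `a = 0` and `k = 2`. A triangle would then be a
closed component, making the graph complete, so the graph is a triangle-free Deza graph of
diameter 2 and hence strongly regular. For (2), a vertex of `B(w)` misses at most one of the
neighbours `x, y, z, xᵢ` of `w`; missing `x` contradicts the shape of `N(xᵢ)`, missing `y`
contradicts (1).
-/

theorem Finset.card_inter_insert_erase {α : Type*} [DecidableEq α] (s A : Finset α) {y z : α}
    (hy : y ∈ A) (hz : z ∉ A) :
    #(s ∩ insert z (A.erase y)) + (if y ∈ s then 1 else 0) =
      #(s ∩ A) + (if z ∈ s then 1 else 0) := by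
  have hzA : z ∉ (s ∩ A).erase y := fun h => hz (mem_inter.1 (mem_of_mem_erase h)).2
  have herase : #((s ∩ A).erase y) + (if y ∈ s then 1 else 0) = #(s ∩ A) := by
    by_cases hys : y ∈ s
    · simp [hys, card_erase_add_one (mem_inter.2 ⟨hys, hy⟩)]
    · simp [hys]
  rw [← herase, ← inter_erase]
  by_cases hzs : z ∈ s
  · rw [inter_insert_of_mem hzs, card_insert_of_notMem (inter_erase y s A ▸ hzA)]
    rw [if_pos hzs]
    omega
  · simp [hzs, inter_insert_of_notMem hzs]

section Deza

variable {V : Type u} [Fintype V] [DecidableEq V] {G : SimpleGraph V} [DecidableRel G.Adj]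

variable (G) in
theorem commonNbrs_comm (u v : V) : commonNbrs G u v = commonNbrs G v u := by
  rw [commonNbrs, commonNbrs, inter_comm]

theorem card_commonNeighbors_eq_commonNbrs (u v : V) :
    Fintype.card (G.commonNeighbors u v) = commonNbrs G u v := by
  rw [commonNbrs, neighborFinset_def, neighborFinset_def, ← Set.toFinset_inter,
    Set.toFinset_card]
  exact Fintype.card_congr (Equiv.refl _)

theorem adj_of_commonNbrs_eq {b : ℕ} (hreg : G.IsRegularOfDegree (b + 1)) {u v p q : V}
    (huv : commonNbrs G u v = b) (hp : G.Adj u p) (hq : G.Adj u q) (hpq : p ≠ q)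
    (hpv : ¬ G.Adj v p) : G.Adj v q := by
  have hcard : #(G.neighborFinset u \ G.neighborFinset v) ≤ 1 := by
    have := card_sdiff_add_card_inter (G.neighborFinset u) (G.neighborFinset v)
    rw [card_neighborFinset_eq_degree, hreg.degree_eq] at this
    rw [commonNbrs] at huv
    omega
  by_contra hqv
  exact hpq (card_le_one.1 hcard p (by simp [hp, hpv]) q (by simp [hq, hqv]))

theorem neighborFinset_eq_insert_erase {b : ℕ} (hreg : G.IsRegularOfDegree (b + 1))
    {u v y z : V} (huv : commonNbrs G u v = b) (hyu : G.Adj u y) (hyv : ¬ G.Adj v y)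
    (hzv : G.Adj v z) (hzu : ¬ G.Adj u z) :
    G.neighborFinset v = insert z ((G.neighborFinset u).erase y) := by
  ext t
  simp only [mem_insert, mem_erase, mem_neighborFinset]
  constructor
  · intro ht
    by_cases htz : t = z
    · exact Or.inl htz
    · exact Or.inr ⟨fun hty => hyv (hty ▸ ht),
        adj_of_commonNbrs_eq hreg (commonNbrs_comm G u v ▸ huv) hzv ht (Ne.symm htz) hzu⟩
  · rintro (rfl | ⟨hty, htu⟩)
    · exact hzv
    · exact adj_of_commonNbrs_eq hreg huv hyu htu (Ne.symm hty) hyv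

theorem eq_top_of_isNClique_succ {k : ℕ} (hconn : G.Connected) (hreg : G.IsRegularOfDegree k)
    {K : Finset V} (hK : G.IsNClique (k + 1) K) : G = ⊤ := by
  have hclosed : ∀ s ∈ K, ∀ t, G.Adj s t → t ∈ K := by
    intro s hs t hst
    have hN : K.erase s = G.neighborFinset s := by
      refine eq_of_subset_of_card_le (fun t ht => ?_) ?_
      · exact (mem_neighborFinset _ _ _).2
          (hK.1 (mem_coe.2 hs) (mem_coe.2 (mem_of_mem_erase ht)) (ne_of_mem_erase ht).symm)
      · rw [card_erase_of_mem hs, hK.2, card_neighborFinset_eq_degree, hreg.degree_eq]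
        rfl
    exact mem_of_mem_erase (hN ▸ (mem_neighborFinset _ _ _).2 hst)
  obtain ⟨s, hs⟩ : K.Nonempty := by
    rw [← card_pos, hK.2]
    exact Nat.succ_pos k
  have hall : ∀ v, v ∈ K := fun v => by
    obtain ⟨p⟩ := hconn s v
    induction p with
    | nil => exact hs
    | cons h _ ih => exact ih (hclosed _ hs _ h)
  ext u v
  exact ⟨fun h => h.ne, fun h => hK.1 (mem_coe.2 (hall u)) (mem_coe.2 (hall v)) h⟩

theorem IsDezaGraph.isSRGWith_of_forall_adj {n k b : ℕ} (hG : IsDezaGraph G n k b 0)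
    (hconn : G.Connected) (hdiam : ∀ u v : V, G.dist u v ≤ 2)
    (hadj : ∀ u v, G.Adj u v → commonNbrs G u v = 0) : G.IsSRGWith n k 0 b where
  card := hG.2.1
  regular := hG.2.2.1
  of_adj u v huv := by rw [card_commonNeighbors_eq_commonNbrs]; exact hadj u v huv
  of_not_adj u v hne huv := by
    have hdist : G.dist u v = 2 := by
      have h0 : G.dist u v ≠ 0 := dist_ne_zero_iff_ne_and_reachable.2 ⟨hne, hconn u v⟩
      have h1 : G.dist u v ≠ 1 := fun h => huv (dist_eq_one_iff_adj.1 h)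
      have := hdiam u v
      omega
    have hcommon : 0 < Fintype.card (G.commonNeighbors u v) := by
      rw [Fintype.card_pos_iff]
      have hedist : G.edist u v = 2 := by rw [← (hconn u v).coe_dist_eq_edist, hdist]; rfl
      exact (edist_eq_two_iff.1 hedist).2.2.to_subtype
    rw [card_commonNeighbors_eq_commonNbrs] at hcommon ⊢
    rcases hG.2.2.2.2 u v hne with h | h <;> omega

theorem not_adj_of_isTypeA {b : ℕ} {x u : V} (hx : IsTypeA G b x) (hu : u ∈ dezaB G b x) :
    ¬ G.Adj x u := fun hadj => by
  have : u ∈ dezaB G b x ∩ G.neighborFinset x := mem_inter.2 ⟨hu, by simpa using hadj⟩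
  rw [IsTypeA] at hx
  simp [hx] at this

theorem commonNbrs_eq_of_isTypeA {n k b a : ℕ} (hG : IsDezaGraph G n k b a) {x u : V}
    (hx : IsTypeA G b x) (hu : G.Adj x u) : commonNbrs G u x = a :=
  (hG.2.2.2.2 u x hu.ne.symm).resolve_left fun hb =>
    not_adj_of_isTypeA hx (by simp [dezaB, hb, hu.ne.symm]) hu

/-- The local picture around a vertex `x` of type (A) and `xi ∈ B(x)` when `k = b + 1`. -/
structure ExchangeConfig (G : SimpleGraph V) [DecidableRel G.Adj] (a b : ℕ) (x xi y z : V) :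
    Prop where
  regular : G.IsRegularOfDegree (b + 1)
  deza : ∀ u v, u ≠ v → commonNbrs G u v = b ∨ commonNbrs G u v = a
  commonNbrs_of_adj : ∀ u, G.Adj x u → commonNbrs G u x = a
  adj_y : G.Adj x y
  not_adj_z : ¬ G.Adj x z
  not_adj_xi : ¬ G.Adj x xi
  neighborFinset_xi : G.neighborFinset xi = insert z ((G.neighborFinset x).erase y)

namespace ExchangeConfig

variable {a b : ℕ} {x xi y z : V}

theorem adj_xi_iff (h : ExchangeConfig G a b x xi y z) {w : V} :
    G.Adj xi w ↔ (G.Adj x w ∧ w ≠ y) ∨ w = z := by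
  rw [← mem_neighborFinset, h.neighborFinset_xi]
  simp [and_comm, or_comm]

theorem adj_xi_z (h : ExchangeConfig G a b x xi y z) : G.Adj xi z :=
  h.adj_xi_iff.2 (Or.inr rfl)

theorem x_ne_z (h : ExchangeConfig G a b x xi y z) : x ≠ z := fun hxz =>
  h.not_adj_xi (by rw [hxz]; exact h.adj_xi_z.symm)

theorem x_ne_xi (h : ExchangeConfig G a b x xi y z) : x ≠ xi := fun hx =>
  h.not_adj_z (by rw [hx]; exact h.adj_xi_z)

theorem y_ne_z (h : ExchangeConfig G a b x xi y z) : y ≠ z := fun hyz =>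
  h.not_adj_z (hyz ▸ h.adj_y)

theorem y_ne_xi (h : ExchangeConfig G a b x xi y z) : y ≠ xi := fun hy =>
  h.not_adj_xi (hy ▸ h.adj_y)

theorem commonNbrs_xi_eq (h : ExchangeConfig G a b x xi y z) {w : V} (hw : G.Adj x w)
    (hwy : w ≠ y) : commonNbrs G w xi = a := by
  have hwxi : G.Adj xi w := h.adj_xi_iff.2 (Or.inl ⟨hw, hwy⟩)
  refine (h.deza w xi hwxi.ne.symm).resolve_left fun hb => ?_
  -- `xi` would be the only neighbour of `w` outside `N(xi)`, but `x` is another one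
  exact h.not_adj_xi (adj_of_commonNbrs_eq h.regular hb hwxi.symm hw.symm
    h.x_ne_xi.symm (G.loopless.irrefl xi)).symm

theorem adj_y_iff_adj_z (h : ExchangeConfig G a b x xi y z) {w : V} (hw : G.Adj x w)
    (hwy : w ≠ y) : G.Adj w y ↔ G.Adj w z := by
  have hcount := (G.neighborFinset w).card_inter_insert_erase (G.neighborFinset x)
    ((mem_neighborFinset _ _ _).2 h.adj_y) (by simpa using h.not_adj_z)
  rw [← h.neighborFinset_xi] at hcount
  have hxi : commonNbrs G w xi = a := h.commonNbrs_xi_eq hw hwy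
  have hx : commonNbrs G w x = a := commonNbrs_comm G x w ▸ h.commonNbrs_of_adj w hw
  rw [commonNbrs] at hxi hx
  rw [hxi, hx] at hcount
  simp only [mem_neighborFinset] at hcount
  split_ifs at hcount with hy hz <;> simp_all

theorem b_eq_of_adj_y_z (h : ExchangeConfig G a b x xi y z) (hyz : G.Adj y z) : b = a + 1 := by
  have hcount := (G.neighborFinset y).card_inter_insert_erase (G.neighborFinset x)
    ((mem_neighborFinset _ _ _).2 h.adj_y) (by simpa using h.not_adj_z)
  have hyx : commonNbrs G y x = a := h.commonNbrs_of_adj y h.adj_y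
  rw [← h.neighborFinset_xi] at hcount
  rw [commonNbrs] at hyx
  have hyxi : commonNbrs G y xi = a + 1 := by
    simpa [hyx, hyz, commonNbrs] using hcount
  rcases h.deza y xi h.y_ne_xi with hb | ha <;> omega

theorem inter_eq_empty_of_adj_y_z (h : ExchangeConfig G a b x xi y z) (hyz : G.Adj y z) :
    G.neighborFinset x ∩ G.neighborFinset y = ∅ := by
  refine eq_empty_of_forall_notMem fun w hw => ?_
  rw [mem_inter, mem_neighborFinset, mem_neighborFinset] at hw
  obtain ⟨hxw, hyw⟩ := hw
  have hwy : w ≠ y := fun hwy => G.loopless.irrefl y (hwy ▸ hyw)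
  have hout : {x, z, xi} ⊆ G.neighborFinset w \ G.neighborFinset x := by
    intro t ht
    simp only [mem_insert, mem_singleton] at ht
    rcases ht with rfl | rfl | rfl
    · simp [hxw.symm]
    · simp [(h.adj_y_iff_adj_z hxw hwy).1 hyw.symm, h.not_adj_z]
    · simp [(h.adj_xi_iff.2 (Or.inl ⟨hxw, hwy⟩)).symm, h.not_adj_xi]
  have hthree : #({x, z, xi} : Finset V) = 3 := by
    refine card_eq_three.2 ⟨x, z, xi, ?_, ?_, ?_, rfl⟩
    exacts [h.x_ne_z, h.x_ne_xi, h.adj_xi_z.ne.symm]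
  have hsplit := card_sdiff_add_card_inter (G.neighborFinset w) (G.neighborFinset x)
  rw [card_neighborFinset_eq_degree, h.regular.degree_eq, ← commonNbrs,
    h.commonNbrs_of_adj w hxw, h.b_eq_of_adj_y_z hyz] at hsplit
  have := card_le_card hout
  omega

theorem not_adj_y_z {n : ℕ} (h : ExchangeConfig G a b x xi y z)
    (hG : IsStrictlyDezaGraph G n (b + 1) b a) (hyxi : ¬ G.Adj y xi) : ¬ G.Adj y z := by
  intro hyz
  have hb := h.b_eq_of_adj_y_z hyz
  have ha : a = 0 := by
    rw [← h.commonNbrs_of_adj y h.adj_y, commonNbrs, inter_comm,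
      h.inter_eq_empty_of_adj_y_z hyz, card_empty]
  obtain ⟨hD, hconn, hdiam, -, hnotSRG⟩ := hG
  subst ha hb
  refine hnotSRG ⟨0, 1, hD.isSRGWith_of_forall_adj hconn hdiam fun u v huv => ?_⟩
  refine (h.deza u v huv.ne).resolve_left fun h1 => ?_
  obtain ⟨w, hw⟩ : (G.neighborFinset u ∩ G.neighborFinset v).Nonempty := by
    rw [← card_pos, ← commonNbrs, h1]
    exact Nat.one_pos
  simp only [mem_inter, mem_neighborFinset] at hw
  have htop := eq_top_of_isNClique_succ hconn h.regular
    (is3Clique_triple_iff.2 ⟨huv, hw.1, hw.2⟩)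
  exact hyxi (htop ▸ h.y_ne_xi)

theorem inter_eq_inter (h : ExchangeConfig G a b x xi y z) (hyz : ¬ G.Adj y z) :
    G.neighborFinset x ∩ G.neighborFinset y = G.neighborFinset x ∩ G.neighborFinset z := by
  ext u
  simp only [mem_inter, mem_neighborFinset]
  refine and_congr_right fun hxu => ?_
  by_cases huy : u = y
  · subst huy
    exact iff_of_false (G.loopless.irrefl _) fun hzu => hyz hzu.symm
  · rw [adj_comm, h.adj_y_iff_adj_z hxu huy, adj_comm]

theorem dezaBc_subset (h : ExchangeConfig G a b x xi y z) (hyz : ¬ G.Adj y z) {w : V}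
    (hw : w ∈ G.neighborFinset x ∩ G.neighborFinset y) :
    dezaBc G b w ⊆ G.neighborFinset x ∩ G.neighborFinset y := by
  intro u hu
  rcases mem_insert.1 hu with rfl | hu
  · exact hw
  have hwu : commonNbrs G w u = b := commonNbrs_comm G u w ▸ (mem_filter.1 hu).2.2
  rw [mem_inter, mem_neighborFinset, mem_neighborFinset] at hw ⊢
  obtain ⟨hxw, hyw⟩ := hw
  have hwy : w ≠ y := fun hwy => G.loopless.irrefl y (hwy ▸ hyw)
  have hzw : G.Adj w z := (h.adj_y_iff_adj_z hxw hwy).1 hyw.symm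
  have hxiw : G.Adj w xi := (h.adj_xi_iff.2 (Or.inl ⟨hxw, hwy⟩)).symm
  have hxu : G.Adj x u := by
    by_contra hxu
    have hux : ¬ G.Adj u x := fun h' => hxu h'.symm
    have hzu := adj_of_commonNbrs_eq h.regular hwu hxw.symm hzw h.x_ne_z hux
    have hxiu := adj_of_commonNbrs_eq h.regular hwu hxw.symm hxiw h.x_ne_xi hux
    have huz : u = z := (h.adj_xi_iff.1 hxiu.symm).resolve_left fun h' => hxu h'.1
    exact G.loopless.irrefl z (huz ▸ hzu)
  have hyu : G.Adj y u := by
    by_contra hyu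
    have hzu := adj_of_commonNbrs_eq h.regular hwu hyw.symm hzw h.y_ne_z fun h' => hyu h'.symm
    have hu : u ∈ G.neighborFinset x ∩ G.neighborFinset z := by simp [hxu, hzu.symm]
    rw [← h.inter_eq_inter hyz, mem_inter, mem_neighborFinset, mem_neighborFinset] at hu
    exact hyu hu.2
  exact ⟨hxu, hyu⟩

end ExchangeConfig

end Deza

theorem stmt9_general {V : Type u} [Fintype V] [DecidableEq V] (G : SimpleGraph V)
    [DecidableRel G.Adj] (n k b a : ℕ)
    (hG : IsStrictlyDezaGraph G n k b a) (hk : k = b + 1) :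
    ∀ x xi y z : V, IsTypeA G b x → xi ∈ dezaB G b x →
      y ∈ G.neighborFinset x → ¬ G.Adj y xi → G.dist x z = 2 → G.Adj z xi →
      G.neighborFinset x ∩ G.neighborFinset y =
        G.neighborFinset x ∩ G.neighborFinset z ∧
      ∀ w ∈ G.neighborFinset x ∩ G.neighborFinset y,
        dezaBc G b w ⊆ G.neighborFinset x ∩ G.neighborFinset y := by
  intro x xi y z hxA hxiB hyN hyxi hdxz hzxi
  subst hk
  have hreg : G.IsRegularOfDegree (b + 1) := hG.1.2.2.1
  have hxy : G.Adj x y := (mem_neighborFinset _ _ _).1 hyN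
  have hxz : ¬ G.Adj x z := fun hadj => by
    rw [dist_eq_one_iff_adj.2 hadj] at hdxz
    omega
  have hC : ExchangeConfig G a b x xi y z :=
    { regular := hreg
      deza := hG.1.2.2.2.2
      commonNbrs_of_adj := fun _ => commonNbrs_eq_of_isTypeA hG.1 hxA
      adj_y := hxy
      not_adj_z := hxz
      not_adj_xi := not_adj_of_isTypeA hxA hxiB
      neighborFinset_xi := neighborFinset_eq_insert_erase hreg
        (commonNbrs_comm G xi x ▸ (mem_filter.1 hxiB).2.2) hxy (fun h => hyxi h.symm)
        hzxi.symm hxz }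
  have hyz := hC.not_adj_y_z hG hyxi
  exact ⟨hC.inter_eq_inter hyz, fun _ hw => hC.dezaBc_subset hyz hw⟩

theorem stmt9 {V : Type u} [Fintype V] [DecidableEq V] (G : SimpleGraph V)
    [DecidableRel G.Adj] (n k b a : ℕ)
    (hG : IsStrictlyDezaGraph G n k b a) (hk : k = b + 1)
    (hβ : ∀ v : V, 1 < (dezaB G b v).card) :
    ∀ x xi y z : V, IsTypeA G b x → xi ∈ dezaB G b x →
      y ∈ G.neighborFinset x → ¬ G.Adj y xi → G.dist x z = 2 → G.Adj z xi →
      G.neighborFinset x ∩ G.neighborFinset y =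
        G.neighborFinset x ∩ G.neighborFinset z ∧
      ∀ w ∈ G.neighborFinset x ∩ G.neighborFinset y,
        dezaBc G b w ⊆ G.neighborFinset x ∩ G.neighborFinset y :=
  stmt9_general G n k b a hG hk
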